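/- The functions f₁ := r − r_s/2 and f₂ := p_t + Ψ on the Boyer–Lindquist phase-space chart U satisfy: (a) their canonical Poisson bracket {f₁, f₂} := Σ_{μ∈{t,r,θ,φ}} (∂f₁/∂p_μ · ∂f₂/∂q^μ − ∂f₁/∂q^μ · ∂f₂/∂p_μ) vanishes identically on U; and (b) at every point of U, the gradients of f₁ and f₂ (the vectors of their eight partial derivatives) are linearly independent. Hence {f₁ = f₂ = 0} is an involutive submanifold of codimension 2 (the double characteristic manifold Σ₂). -/

import Mathlib

noncomputable section

/-- Partial derivative of a function on phase space ℝ⁸ with respect to the i-th variable.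
Coordinates: x 0 = t, x 1 = r, x 2 = θ, x 3 = φ, x 4 = p_t, x 5 = p_r, x 6 = p_θ, x 7 = p_φ. -/
def pd (i : Fin 8) (f : (Fin 8 → ℝ) → ℝ) (x : Fin 8 → ℝ) : ℝ :=
  deriv (fun s => f (Function.update x i s)) (x i)

/-- Canonical Poisson bracket {f,g} = Σ_μ (∂f/∂p_μ ∂g/∂q^μ − ∂f/∂q^μ ∂g/∂p_μ). -/
def poissonBracket (f g : (Fin 8 → ℝ) → ℝ) (x : Fin 8 → ℝ) : ℝ :=
  (pd 4 f x * pd 0 g x - pd 0 f x * pd 4 g x) +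
  (pd 5 f x * pd 1 g x - pd 1 f x * pd 5 g x) +
  (pd 6 f x * pd 2 g x - pd 2 f x * pd 6 g x) +
  (pd 7 f x * pd 3 g x - pd 3 f x * pd 7 g x)

/-- The gradient of f : the vector of its eight partial derivatives. -/
def grad (f : (Fin 8 → ℝ) → ℝ) (x : Fin 8 → ℝ) : Fin 8 → ℝ := fun i => pd i f x

/-- Σ = r² + (r_s²/4)·cos²θ -/
def Sig (rs r th : ℝ) : ℝ := r ^ 2 + rs ^ 2 / 4 * Real.cos th ^ 2

/-- D = r² + r_s²/4 + (r_s·r/Σ)·(r_s²/4)·sin²θ -/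
def Dfun (rs r th : ℝ) : ℝ :=
  r ^ 2 + rs ^ 2 / 4 + rs * r / Sig rs r th * (rs ^ 2 / 4) * Real.sin th ^ 2

/-- Ψ = ((r_s·c/2)·(r_s·r/Σ)/D)·p_φ, as a function on phase space. -/
def Psiv (rs c : ℝ) (x : Fin 8 → ℝ) : ℝ :=
  rs * c / 2 * (rs * x 1 / Sig rs (x 1) (x 2)) / Dfun rs (x 1) (x 2) * x 7

/-- f₁ = r − r_s/2 -/
def f1 (rs : ℝ) (x : Fin 8 → ℝ) : ℝ := x 1 - rs / 2

/-- f₂ = p_t + Ψ -/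
def f2 (rs c : ℝ) (x : Fin 8 → ℝ) : ℝ := x 4 + Psiv rs c x

/-! Ψ depends only on r, θ and p_φ, so f₂ does not involve p_r; since f₁ depends on r alone,
{f₁, f₂} = -∂f₂/∂p_r = 0. The gradients are independent because ∂f₁/∂r = 1 while
∂f₁/∂p_t = 0 and ∂f₂/∂p_t = 1. -/

open Function

lemma pd_eq_zero_of_update_eq {i : Fin 8} {f : (Fin 8 → ℝ) → ℝ} {x : Fin 8 → ℝ}
    (h : ∀ s, f (update x i s) = f x) : pd i f x = 0 := by
  simp only [pd, h, deriv_const]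

lemma pd_f1 (rs : ℝ) (x : Fin 8 → ℝ) (i : Fin 8) :
    pd i (f1 rs) x = if i = 1 then 1 else 0 := by
  fin_cases i <;> simp [pd, f1]

lemma poissonBracket_f1_left (rs : ℝ) (g : (Fin 8 → ℝ) → ℝ) (x : Fin 8 → ℝ) :
    poissonBracket (f1 rs) g x = -pd 5 g x := by
  simp [poissonBracket, pd_f1]

lemma f2_update_pr (rs c : ℝ) (x : Fin 8 → ℝ) (s : ℝ) :
    f2 rs c (update x 5 s) = f2 rs c x := by
  simp [f2, Psiv]

lemma pd_f2_pr (rs c : ℝ) (x : Fin 8 → ℝ) : pd 5 (f2 rs c) x = 0 :=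
  pd_eq_zero_of_update_eq (f2_update_pr rs c x)

lemma pd_f2_pt (rs c : ℝ) (x : Fin 8 → ℝ) : pd 4 (f2 rs c) x = 1 := by
  have h : (fun s => f2 rs c (update x 4 s)) = fun s => s + Psiv rs c x := by
    ext s
    simp [f2, Psiv]
  simp only [pd, h, deriv_add_const, deriv_id'']

lemma linearIndependent_pair_of_apply {ι K : Type*} [Field K] {u v : ι → K} {j k : ι}
    (hu : u j ≠ 0) (huk : u k = 0) (hv : v k ≠ 0) : LinearIndependent K ![u, v] := by
  rw [LinearIndependent.pair_iff]
  intro s t hst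
  have ht : t = 0 := by
    simpa [huk, hv] using congrFun hst k
  subst ht
  simpa [hu] using congrFun hst j

theorem Sigma2_involutive_codim_two_general
    (rs c : ℝ)
    (x : Fin 8 → ℝ) :
    poissonBracket (f1 rs) (f2 rs c) x = 0 ∧
    LinearIndependent ℝ ![grad (f1 rs) x, grad (f2 rs c) x] := by
  refine ⟨by rw [poissonBracket_f1_left, pd_f2_pr, neg_zero], ?_⟩
  refine linearIndependent_pair_of_apply (j := 1) (k := 4) ?_ ?_ ?_ <;>
    simp [grad, pd_f1, pd_f2_pt]

/-- on U, (a) the canonical Poisson bracket {f₁, f₂} vanishes identically,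
and (b) the gradients of f₁ and f₂ are linearly independent at every point.  Hence
Σ₂ = {f₁ = f₂ = 0} is an involutive submanifold of codimension 2. -/
theorem Sigma2_involutive_codim_two
    (rs c : ℝ) (hrs : 0 < rs) (hc : 0 < c)
    (x : Fin 8 → ℝ) (hr : 0 < x 1) (hth : Real.sin (x 2) ≠ 0) :
    poissonBracket (f1 rs) (f2 rs c) x = 0 ∧
    LinearIndependent ℝ ![grad (f1 rs) x, grad (f2 rs c) x] :=
  Sigma2_involutive_codim_two_general rs c x
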